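/- arXiv:1402.5164 — 3 statements merged into one kernel-verified Lean document; each statement's English description precedes it below -/
import Mathlib

section
/- For every real a ≥ 1, the Chebyshev polynomial of the first kind satisfies T_{⌈a⌉}(1 + 1/a²) ≥ 2. -/
/-!
Write `x = cosh θ` with `θ ≥ 0`, so that `T_n x = cosh (n θ)`. Since `cosh u = 1 + 2 sinh² (u / 2)`
and `n sinh s ≤ sinh (n s)` for `s ≥ 0`, this gives `T_n x ≥ 1 + n² (x - 1)` for all `x ≥ 1`.
At `x = 1 + 1 / a²` and `n = ⌈a⌉ ≥ a > 0` the right-hand side is `1 + n² / a² ≥ 2`.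
-/

open Real Polynomial.Chebyshev

theorem Real.nat_mul_sinh_le_sinh_nat_mul (n : ℕ) {t : ℝ} (ht : 0 ≤ t) :
    n * sinh t ≤ sinh (n * t) := by
  induction n with
  | zero => simp
  | succ n ih =>
    have hsinh : 0 ≤ sinh t := sinh_nonneg_iff.mpr ht
    have hsinh_n : 0 ≤ sinh (n * t) := sinh_nonneg_iff.mpr (by positivity)
    calc ((n + 1 : ℕ) : ℝ) * sinh t = n * sinh t + sinh t := by push_cast; ring
      _ ≤ sinh (n * t) * cosh t + cosh (n * t) * sinh t := by
          gcongr ?_ + ?_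
          · exact ih.trans (le_mul_of_one_le_right hsinh_n (one_le_cosh t))
          · exact le_mul_of_one_le_left hsinh (one_le_cosh _)
      _ = sinh ((n + 1 : ℕ) * t) := by push_cast; rw [add_mul, one_mul, sinh_add]

theorem Real.cosh_eq_one_add_two_mul_sinh_half_sq (x : ℝ) :
    cosh x = 1 + 2 * sinh (x / 2) ^ 2 := by
  have h := cosh_two_mul (x / 2)
  rw [cosh_sq, mul_div_cancel₀ x two_ne_zero] at h
  linarith

theorem Real.one_add_sq_mul_cosh_sub_one_le_cosh_nat_mul (n : ℕ) {t : ℝ} (ht : 0 ≤ t) :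
    1 + n ^ 2 * (cosh t - 1) ≤ cosh (n * t) := by
  have hsinh := nat_mul_sinh_le_sinh_nat_mul n (t := t / 2) (by positivity)
  have hsq := pow_le_pow_left₀ (mul_nonneg n.cast_nonneg (sinh_nonneg_iff.mpr (by positivity)))
    hsinh 2
  rw [mul_pow] at hsq
  rw [cosh_eq_one_add_two_mul_sinh_half_sq t, cosh_eq_one_add_two_mul_sinh_half_sq (n * t),
    mul_div_assoc]
  linarith

theorem Polynomial.Chebyshev.one_add_sq_mul_sub_one_le_eval_T (n : ℤ) {x : ℝ} (hx : 1 ≤ x) :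
    1 + n ^ 2 * (x - 1) ≤ (T ℝ n).eval x := by
  have hsq : (n.natAbs : ℝ) ^ 2 = (n : ℝ) ^ 2 := by rw [Nat.cast_natAbs, Int.cast_abs, sq_abs]
  rw [← cosh_arcosh hx, ← T_natAbs, T_real_cosh, Int.cast_natCast, ← hsq]
  exact one_add_sq_mul_cosh_sub_one_le_cosh_nat_mul _ (arcosh_nonneg hx)

/-- For every real `a ≥ 1`, `T_{⌈a⌉}(1 + 1/a²) ≥ 2`. -/
theorem chebyshev_ceil_ge_two (a : ℝ) (ha : 1 ≤ a) :
    2 ≤ (Polynomial.Chebyshev.T ℝ ⌈a⌉).eval (1 + 1 / a ^ 2) := by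
  have ha0 : 0 < a := by linarith
  have hsq : a ^ 2 ≤ (⌈a⌉ : ℝ) ^ 2 := pow_le_pow_left₀ ha0.le (Int.le_ceil a) 2
  calc (2 : ℝ) ≤ 1 + (⌈a⌉ : ℝ) ^ 2 * (1 + 1 / a ^ 2 - 1) := by
        rw [add_sub_cancel_left, mul_one_div, ← one_add_one_eq_two, add_le_add_iff_left,
          one_le_div (by positivity)]
        exact hsq
    _ ≤ _ := one_add_sq_mul_sub_one_le_eval_T _ (le_add_of_nonneg_right (by positivity))
end

section
/- Let f₁, …, f_m : {−1,1}ⁿ → {−1,1}, and for each i let p_i be a positive one-sided (ε/m)-approximation of f_i. Define p(x) = −1 + Σ_{i=1}^m (1 + p_i(x)). Then p is a positive one-sided ε-approximation of the disjunction OR_m(f₁,…,f_m), where OR outputs 1 if any f_i(x) = 1 and −1 otherwise. -/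
/-- If each `pᵢ` is a positive one-sided `(ε/m)`-approximation of `fᵢ`, then
`p(x) = -1 + ∑ᵢ (1 + pᵢ(x))` is a positive one-sided ε-approximation of
`OR_m(f₁, …, f_m)`. -/
theorem or_of_pos_one_sided (n m : ℕ) (hm : 0 < m) (ε : ℝ)
    (f p : Fin m → (Fin n → ℝ) → ℝ)
    (hf : ∀ i, ∀ x : Fin n → ℝ, (∀ j, x j = -1 ∨ x j = 1) → f i x = -1 ∨ f i x = 1)
    (hpos : ∀ i, ∀ x : Fin n → ℝ, (∀ j, x j = -1 ∨ x j = 1) →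
      (f i x = 1 → 1 - ε / m ≤ p i x) ∧ (f i x = -1 → |p i x + 1| ≤ ε / m)) :
    ∀ x : Fin n → ℝ, (∀ j, x j = -1 ∨ x j = 1) →
      ((∃ i, f i x = 1) → 1 - ε ≤ -1 + ∑ i, (1 + p i x)) ∧
      ((∀ i, f i x = -1) → |(-1 + ∑ i, (1 + p i x)) + 1| ≤ ε) := by
  intro x hx
  have hm' : (0 : ℝ) < m := by exact_mod_cast hm
  constructor
  · rintro ⟨i, hi⟩
    -- each term is ≥ -ε/m
    have hterm : ∀ j, -(ε / m) ≤ 1 + p j x := by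
      intro j
      rcases hf j x hx with hj | hj
      · have := (hpos j x hx).2 hj
        have := abs_le.mp this
        linarith [this.1]
      · have := (hpos j x hx).1 hj
        nlinarith
    have hi' : 2 - ε / m ≤ 1 + p i x := by
      have := (hpos i x hx).1 hi; linarith
    have hsum : (2 - ε / m) + ∑ j ∈ Finset.univ.erase i, -(ε / m)
        ≤ ∑ j, (1 + p j x) := by
      rw [← Finset.add_sum_erase _ _ (Finset.mem_univ i)]
      exact add_le_add hi' (Finset.sum_le_sum fun j _ => hterm j)
    have hcard : (Finset.univ.erase i).card = m - 1 := by
      rw [Finset.card_erase_of_mem (Finset.mem_univ i), Finset.card_univ, Fintype.card_fin]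
    have hcardR : ((Finset.univ.erase i).card : ℝ) = (m : ℝ) - 1 := by
      rw [hcard]
      have : (1:ℕ) ≤ m := hm
      push_cast [Nat.cast_sub this]
      ring
    rw [Finset.sum_const, nsmul_eq_mul, hcardR] at hsum
    have : ((m:ℝ) - 1) * -(ε / m) = -ε + ε / m := by
      field_simp; ring
    rw [this] at hsum
    linarith
  · intro hall
    have habs : ∀ j, |1 + p j x| ≤ ε / m := by
      intro j
      have := (hpos j x hx).2 (hall j)
      rwa [show p j x + 1 = 1 + p j x by ring] at this
    have h1 : |∑ j, (1 + p j x)| ≤ ∑ j : Fin m, (ε / m) :=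
      (Finset.abs_sum_le_sum_abs _ _).trans (Finset.sum_le_sum fun j _ => habs j)
    rw [Finset.sum_const, nsmul_eq_mul, Finset.card_univ, Fintype.card_fin] at h1
    have h2 : (m : ℝ) * (ε / m) = ε := by field_simp
    rw [h2] at h1
    have : (-1 + ∑ j, (1 + p j x)) + 1 = ∑ j, (1 + p j x) := by ring
    rw [this]
    exact h1
end

section
/- Let f₁, …, f_m : {−1,1}ⁿ → {−1,1}, and for each i let p_i be a negative one-sided (ε/m)-approximation of f_i. Define p(x) = 1 − Σ_{i=1}^m (1 − p_i(x)). Then p is a negative one-sided ε-approximation of the conjunction AND_m(f₁,…,f_m), where AND outputs 1 if all f_i(x) = 1 and −1 otherwise. -/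
/-- If each `pᵢ` is a negative one-sided `(ε/m)`-approximation of `fᵢ`, then
`p(x) = 1 - ∑ᵢ (1 - pᵢ(x))` is a negative one-sided ε-approximation of
`AND_m(f₁, …, f_m)`. -/
theorem and_of_neg_one_sided (n m : ℕ) (hm : 0 < m) (ε : ℝ)
    (f p : Fin m → (Fin n → ℝ) → ℝ)
    (hf : ∀ i, ∀ x : Fin n → ℝ, (∀ j, x j = -1 ∨ x j = 1) → f i x = -1 ∨ f i x = 1)
    (hneg : ∀ i, ∀ x : Fin n → ℝ, (∀ j, x j = -1 ∨ x j = 1) →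
      (f i x = 1 → |p i x - 1| ≤ ε / m) ∧ (f i x = -1 → p i x ≤ -1 + ε / m)) :
    ∀ x : Fin n → ℝ, (∀ j, x j = -1 ∨ x j = 1) →
      ((∀ i, f i x = 1) → |(1 - ∑ i, (1 - p i x)) - 1| ≤ ε) ∧
      ((∃ i, f i x = -1) → 1 - ∑ i, (1 - p i x) ≤ -1 + ε) := by
  intro x hx
  have hm' : (0:ℝ) < m := by exact_mod_cast hm
  constructor
  · intro hall
    have h1 : |(1 - ∑ i, (1 - p i x)) - 1| = |∑ i, (1 - p i x)| := by
      rw [show (1 - ∑ i, (1 - p i x)) - 1 = -(∑ i, (1 - p i x)) by ring, abs_neg]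
    rw [h1]
    calc |∑ i, (1 - p i x)| ≤ ∑ i, |1 - p i x| := Finset.abs_sum_le_sum_abs _ _
      _ ≤ ∑ _i : Fin m, ε / m := by
          apply Finset.sum_le_sum
          intro i _
          rw [abs_sub_comm]
          exact (hneg i x hx).1 (hall i)
      _ = ε := by
          rw [Finset.sum_const, Finset.card_univ, Fintype.card_fin, nsmul_eq_mul]
          field_simp
  · rintro ⟨i₀, hi₀⟩
    have key : ∑ i, (1 - p i x) ≥ 2 - ε := by
      have hsplit : ∑ i, (1 - p i x) =
          (1 - p i₀ x) + ∑ i ∈ Finset.univ.erase i₀, (1 - p i x) := by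
        exact (Finset.add_sum_erase _ (fun i => 1 - p i x) (Finset.mem_univ i₀)).symm
      rw [hsplit]
      have hb₀ : 1 - p i₀ x ≥ 2 - ε / m := by
        have := (hneg i₀ x hx).2 hi₀
        linarith
      have hrest : ∑ i ∈ Finset.univ.erase i₀, (1 - p i x) ≥
          ∑ _i ∈ Finset.univ.erase i₀, (-(ε / m)) := by
        apply Finset.sum_le_sum
        intro i _
        rcases hf i x hx with h | h
        · have := (hneg i x hx).2 h
          linarith
        · have := (hneg i x hx).1 h
          have := abs_le.mp this
          linarith [this.1]
      have hcard : (Finset.univ.erase i₀).card = m - 1 := by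
        rw [Finset.card_erase_of_mem (Finset.mem_univ i₀), Finset.card_univ,
          Fintype.card_fin]
      have hsum : ∑ _i ∈ Finset.univ.erase i₀, (-(ε / m)) = (m - 1 : ℕ) * (-(ε / m)) := by
        rw [Finset.sum_const, hcard, nsmul_eq_mul]
      have hcast : ((m - 1 : ℕ) : ℝ) = (m : ℝ) - 1 := by
        have : 1 ≤ m := hm
        push_cast [this]
        ring
      rw [hsum, hcast] at hrest
      have : ((m:ℝ) - 1) * (-(ε / m)) = -ε + ε / m := by
        field_simp
        ring
      rw [this] at hrest
      linarith
    linarith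
end
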